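/- In the Core logic sequent calculus, the sequent ¬A ⊢ A → B is derivable for all formulas A, B (via R→(a)), even though ¬A, A ⊢ B is not derivable for distinct atoms A, B. -/
import Mathlib


inductive Form : Type where
  | var : Nat → Form
  | neg : Form → Form
  | conj : Form → Form → Form
  | disj : Form → Form → Form
  | imp : Form → Form → Form
deriving DecidableEq

open Form

/-- Sequent calculus for propositional Core logic (Tennant).
Contexts are finite sets of formulas; the conclusion is `some C` or `none`
(the empty / absurdity conclusion ⊥). -/
inductive Core : Finset Form → Option Form → Prop where
  | ax (A : Form) : Core {A} (some A)
  | lneg {Δ : Finset Form} {A : Form} :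
      Core Δ (some A) → Core (insert (Form.neg A) Δ) none
  | rneg {Δ : Finset Form} {A : Form} :
      Core (insert A Δ) none → Core Δ (some (Form.neg A))
  | landL {Δ : Finset Form} {x : Option Form} (A B : Form) :
      Core Δ x → (Δ ∩ {A, B}).Nonempty →
      Core (insert (Form.conj A B) (Δ \ {A, B})) x
  | randR {Δ Γ : Finset Form} {A B : Form} :
      Core Δ (some A) → Core Γ (some B) → Core (Δ ∪ Γ) (some (Form.conj A B))
  | lor {Δ Γ : Finset Form} {A B : Form} {x y z : Option Form} :
      Core (insert A Δ) x → Core (insert B Γ) y →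
      ((x = z ∧ (y = z ∨ y = none)) ∨ (y = z ∧ x = none)) →
      Core (insert (Form.disj A B) (Δ ∪ Γ)) z
  | ror1 {Δ : Finset Form} {A : Form} (B : Form) :
      Core Δ (some A) → Core Δ (some (Form.disj A B))
  | ror2 {Δ : Finset Form} {B : Form} (A : Form) :
      Core Δ (some B) → Core Δ (some (Form.disj A B))
  | limp {Δ Γ : Finset Form} {A B : Form} {x : Option Form} :
      Core Δ (some A) → Core (insert B Γ) x →
      Core (insert (Form.imp A B) (Δ ∪ Γ)) x
  | rimpa {Δ : Finset Form} {A : Form} (B : Form) :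
      Core (insert A Δ) none → Core Δ (some (Form.imp A B))
  | rimpb {Δ : Finset Form} {B : Form} (A : Form) :
      Core Δ (some B) → Core (Δ \ {A}) (some (Form.imp A B))

/-- ¬A ⊢ A → B is Core-derivable for all A, B, even though
¬A, A ⊢ B is not Core-derivable for distinct atoms. -/
theorem core_neg_implies_imp :
    (∀ A B : Form, Core ({Form.neg A} : Finset Form) (some (Form.imp A B))) ∧
    (∀ p q : Nat, p ≠ q →
      ¬ Core ({Form.neg (Form.var p), Form.var p} : Finset Form)
          (some (Form.var q))) := by
  constructor
  · intro A B
    apply Core.rimpa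
    have h : Core (insert (Form.neg A) ({A} : Finset Form)) none :=
      Core.lneg (Core.ax A)
    have e : (insert A ({Form.neg A} : Finset Form)) =
        insert (Form.neg A) ({A} : Finset Form) := by
      ext x; simp [Finset.mem_insert]; tauto
    rw [e]; exact h
  · intro p q hpq h
    generalize hD : ({Form.neg (Form.var p), Form.var p} : Finset Form) = D at h
    have hmem : ∀ C : Form, C ∈ D →
        C = Form.neg (Form.var p) ∨ C = Form.var p := by
      intro C hC; rw [← hD] at hC; simpa using hC
    have hcard : Form.var p ∈ D := by rw [← hD]; simp
    cases h with
    | ax A =>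
      simp at hcard
      exact hpq hcard
    | landL A B h1 h2 =>
      rcases hmem _ (Finset.mem_insert_self _ _) with h | h <;> simp at h
    | lor h1 h2 h3 =>
      rcases hmem _ (Finset.mem_insert_self _ _) with h | h <;> simp at h
    | limp h1 h2 =>
      rcases hmem _ (Finset.mem_insert_self _ _) with h | h <;> simp at h
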